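/- Assume the game admits a Nash equilibrium δ*. Then the optimal value of the penalized formulation (R) is zero: there exists a feasible solution (δ, v, ϖ) of (R) with ϖ = 0, and every feasible solution of (R) has objective ϖ ≥ 0. -/

import Mathlib

open Finset

variable {N : Type*} [Fintype N] [DecidableEq N] [Nonempty N]
variable {A : N → Type*} [∀ i, Fintype (A i)] [∀ i, DecidableEq (A i)]
variable [∀ i, Nonempty (A i)]

/-- `δ` is a mixed strategy profile: each `δ i` is nonnegative and sums to 1. -/
def IsMixedProfile {N : Type*} {A : N → Type*} [∀ i, Fintype (A i)]
    (δ : ∀ i, A i → ℝ) : Prop :=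
  (∀ i a, 0 ≤ δ i a) ∧ ∀ i, ∑ a, δ i a = 1

/-- Expected utility of player `i` under mixed strategy profile `δ`. -/
def expUtil {N : Type*} [Fintype N] [DecidableEq N] {A : N → Type*}
    [∀ i, Fintype (A i)] (u : N → (∀ j, A j) → ℝ) (δ : ∀ i, A i → ℝ) (i : N) : ℝ :=
  ∑ a : ∀ j, A j, (∏ j, δ j (a j)) * u i a

/-- The point-mass (pure) strategy on action `ai`. -/
def pureStrat {N : Type*} {A : N → Type*} [∀ i, DecidableEq (A i)]
    (i : N) (ai : A i) : A i → ℝ := fun b => if b = ai then 1 else 0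

/-- `u_i(a_i, δ_{-i})`: expected utility of player `i` when playing the pure
action `ai` against the opponents' profile `δ_{-i}`. -/
def devUtil {N : Type*} [Fintype N] [DecidableEq N] {A : N → Type*}
    [∀ i, Fintype (A i)] [∀ i, DecidableEq (A i)]
    (u : N → (∀ j, A j) → ℝ) (δ : ∀ i, A i → ℝ) (i : N) (ai : A i) : ℝ :=
  expUtil u (Function.update δ i (pureStrat i ai)) i

/-- Minimum of `u i` over pure action profiles. -/
noncomputable def minU {N : Type*} [Fintype N] [DecidableEq N] {A : N → Type*}
    [∀ i, Fintype (A i)] [∀ i, Nonempty (A i)]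
    (u : N → (∀ j, A j) → ℝ) (i : N) : ℝ :=
  Finset.univ.inf' Finset.univ_nonempty (u i)

/-- Maximum of `u i` over pure action profiles. -/
noncomputable def maxU {N : Type*} [Fintype N] [DecidableEq N] {A : N → Type*}
    [∀ i, Fintype (A i)] [∀ i, Nonempty (A i)]
    (u : N → (∀ j, A j) → ℝ) (i : N) : ℝ :=
  Finset.univ.sup' Finset.univ_nonempty (u i)

/-- `δ` is a Nash equilibrium. -/
def IsNashEq {N : Type*} [Fintype N] [DecidableEq N] {A : N → Type*}
    [∀ i, Fintype (A i)] (u : N → (∀ j, A j) → ℝ) (δ : ∀ i, A i → ℝ) : Prop :=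
  IsMixedProfile δ ∧ ∀ (i : N) (δ' : A i → ℝ), (∀ a, 0 ≤ δ' a) → (∑ a, δ' a = 1) →
    expUtil u (Function.update δ i δ') i ≤ expUtil u δ i

/-- `δ` is an ε-Nash equilibrium. -/
def IsEpsNashEq {N : Type*} [Fintype N] [DecidableEq N] {A : N → Type*}
    [∀ i, Fintype (A i)] (u : N → (∀ j, A j) → ℝ) (δ : ∀ i, A i → ℝ) (ε : ℝ) : Prop :=
  IsMixedProfile δ ∧ ∀ (i : N) (δ' : A i → ℝ), (∀ a, 0 ≤ δ' a) → (∑ a, δ' a = 1) →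
    expUtil u (Function.update δ i δ') i ≤ expUtil u δ i + ε

/-- Feasibility for the mixed-integer formulation (P). -/
def FeasP {N : Type*} [Fintype N] [DecidableEq N] {A : N → Type*}
    [∀ i, Fintype (A i)] [∀ i, DecidableEq (A i)] [∀ i, Nonempty (A i)]
    (u : N → (∀ j, A j) → ℝ) (δ : ∀ i, A i → ℝ) (v : N → ℝ)
    (z s : ∀ i, A i → ℝ) : Prop :=
  IsMixedProfile δ ∧ ∀ (i : N) (ai : A i),
    v i = s i ai + devUtil u δ i ai ∧
    δ i ai ≤ z i ai ∧
    s i ai ≤ (1 - z i ai) * (maxU u i - minU u i) ∧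
    0 ≤ s i ai ∧ s i ai ≤ maxU u i - minU u i ∧
    minU u i ≤ v i ∧ v i ≤ maxU u i ∧
    (z i ai = 0 ∨ z i ai = 1)

/-- Feasibility for the continuous formulation (Q). -/
def FeasQ {N : Type*} [Fintype N] [DecidableEq N] {A : N → Type*}
    [∀ i, Fintype (A i)] [∀ i, DecidableEq (A i)] [∀ i, Nonempty (A i)]
    (u : N → (∀ j, A j) → ℝ) (δ : ∀ i, A i → ℝ) (v : N → ℝ) : Prop :=
  IsMixedProfile δ ∧ ∀ (i : N) (ai : A i),
    0 ≤ v i - devUtil u δ i ai ∧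
    δ i ai * (v i - devUtil u δ i ai) = 0 ∧
    minU u i ≤ v i ∧ v i ≤ maxU u i

/-- Feasibility for the penalized formulation (R). -/
def FeasR {N : Type*} [Fintype N] [DecidableEq N] {A : N → Type*}
    [∀ i, Fintype (A i)] [∀ i, DecidableEq (A i)] [∀ i, Nonempty (A i)]
    (u : N → (∀ j, A j) → ℝ) (δ : ∀ i, A i → ℝ) (v : N → ℝ) (ϖ : ℝ) : Prop :=
  IsMixedProfile δ ∧ ∀ (i : N) (ai : A i),
    δ i ai * (v i - devUtil u δ i ai) ≤ ϖ ∧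
    -(δ i ai * (v i - devUtil u δ i ai)) ≤ ϖ ∧
    0 ≤ v i - devUtil u δ i ai ∧
    minU u i ≤ v i ∧ v i ≤ maxU u i

/-!
At a Nash equilibrium `δ` take `v i = u_i(δ)`. No pure deviation pays more than `v i`, and `u_i(δ)`
is the `δ i`-average of the pure-deviation payoffs, so the nonnegative products
`δ i a * (v i - u_i(a, δ_{-i}))` sum to `v i - v i = 0` and each of them vanishes: this is a
feasible point of (R) with `ϖ = 0`. Conversely, `ϖ` bounds some product and its negative, so `ϖ ≥ 0`.
-/

omit [Nonempty N] [∀ i, Fintype (A i)] [∀ i, DecidableEq (A i)] [∀ i, Nonempty (A i)] in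
lemma prod_update_apply {M : Type*} [CommMonoid M] (δ : ∀ i, A i → M) (i : N)
    (f : A i → M) (a : ∀ j, A j) :
    ∏ j, Function.update δ i f j (a j) = f (a i) * ∏ j ∈ univ.erase i, δ j (a j) := by
  rw [← mul_prod_erase univ _ (mem_univ i), Function.update_self]
  congr 1
  exact prod_congr rfl fun j hj => by rw [Function.update_of_ne (ne_of_mem_erase hj)]

section Utility

variable (u : N → (∀ j, A j) → ℝ) (δ : ∀ i, A i → ℝ) (i : N)

omit [Nonempty N] [∀ i, DecidableEq (A i)] [∀ i, Nonempty (A i)] in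
lemma expUtil_update (f : A i → ℝ) :
    expUtil u (Function.update δ i f) i =
      ∑ a : ∀ j, A j, f (a i) * ((∏ j ∈ univ.erase i, δ j (a j)) * u i a) := by
  simp only [expUtil, prod_update_apply, mul_assoc]

omit [Nonempty N] [∀ i, Nonempty (A i)] in
lemma expUtil_update_eq_sum_devUtil (f : A i → ℝ) :
    expUtil u (Function.update δ i f) i = ∑ b, f b * devUtil u δ i b := by
  simp only [devUtil, expUtil_update, pureStrat, mul_sum, ite_mul, one_mul, zero_mul,
    mul_ite, mul_zero]
  rw [sum_comm]
  simp

omit [Nonempty N] [∀ i, Nonempty (A i)] in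
lemma expUtil_eq_sum_devUtil : expUtil u δ i = ∑ b, δ i b * devUtil u δ i b := by
  simpa using expUtil_update_eq_sum_devUtil u δ i (δ i)

end Utility

namespace IsMixedProfile

variable {δ : ∀ i, A i → ℝ} (hδ : IsMixedProfile δ)
include hδ

omit [Nonempty N] [∀ i, DecidableEq (A i)] [∀ i, Nonempty (A i)] in
lemma sum_prod_eq_one : ∑ a : ∀ j, A j, ∏ j, δ j (a j) = 1 := by
  rw [← Fintype.prod_sum]
  simp [hδ.2]

omit [DecidableEq N] [Nonempty N] [∀ i, DecidableEq (A i)] [∀ i, Nonempty (A i)] in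
lemma prod_nonneg (a : ∀ j, A j) : 0 ≤ ∏ j, δ j (a j) :=
  Finset.prod_nonneg fun j _ => hδ.1 j (a j)

omit [Nonempty N] [∀ i, DecidableEq (A i)] in
lemma minU_le_expUtil (u : N → (∀ j, A j) → ℝ) (i : N) : minU u i ≤ expUtil u δ i :=
  calc minU u i = ∑ a : ∀ j, A j, (∏ j, δ j (a j)) * minU u i := by
        rw [← sum_mul, hδ.sum_prod_eq_one, one_mul]
    _ ≤ expUtil u δ i := sum_le_sum fun a _ =>
        mul_le_mul_of_nonneg_left (inf'_le _ (mem_univ a)) (hδ.prod_nonneg a)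

omit [Nonempty N] [∀ i, DecidableEq (A i)] in
lemma expUtil_le_maxU (u : N → (∀ j, A j) → ℝ) (i : N) : expUtil u δ i ≤ maxU u i :=
  calc expUtil u δ i ≤ ∑ a : ∀ j, A j, (∏ j, δ j (a j)) * maxU u i := sum_le_sum fun a _ =>
        mul_le_mul_of_nonneg_left (le_sup' _ (mem_univ a)) (hδ.prod_nonneg a)
    _ = maxU u i := by rw [← sum_mul, hδ.sum_prod_eq_one, one_mul]

end IsMixedProfile

namespace IsNashEq

variable {u : N → (∀ j, A j) → ℝ} {δ : ∀ i, A i → ℝ} (h : IsNashEq u δ)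
include h

omit [Nonempty N] [∀ i, Nonempty (A i)] in
lemma devUtil_le_expUtil (i : N) (ai : A i) : devUtil u δ i ai ≤ expUtil u δ i :=
  h.2 i (pureStrat i ai) (fun b => by unfold pureStrat; positivity) (by simp [pureStrat])

omit [Nonempty N] [∀ i, Nonempty (A i)] in
lemma mul_sub_devUtil_eq_zero (i : N) (ai : A i) :
    δ i ai * (expUtil u δ i - devUtil u δ i ai) = 0 := by
  have hsum : ∑ b, δ i b * (expUtil u δ i - devUtil u δ i b) = 0 := by
    simp only [mul_sub, sum_sub_distrib, ← sum_mul, h.1.2 i, one_mul,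
      ← expUtil_eq_sum_devUtil, sub_self]
  have hnonneg : ∀ b ∈ univ, 0 ≤ δ i b * (expUtil u δ i - devUtil u δ i b) := fun b _ =>
    mul_nonneg (h.1.1 i b) (sub_nonneg.2 (h.devUtil_le_expUtil i b))
  exact (sum_eq_zero_iff_of_nonneg hnonneg).1 hsum ai (mem_univ ai)

omit [Nonempty N] in
lemma feasR : FeasR u δ (expUtil u δ) 0 := by
  refine ⟨h.1, fun i ai => ?_⟩
  have hslack := h.mul_sub_devUtil_eq_zero i ai
  exact ⟨hslack.le, by simp [hslack], sub_nonneg.2 (h.devUtil_le_expUtil i ai),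
    h.1.minU_le_expUtil u i, h.1.expUtil_le_maxU u i⟩

end IsNashEq

lemma FeasR.nonneg {u : N → (∀ j, A j) → ℝ} {δ : ∀ i, A i → ℝ} {v : N → ℝ} {ϖ : ℝ}
    (h : FeasR u δ v ϖ) : 0 ≤ ϖ := by
  obtain ⟨hle, hneg_le, -⟩ := h.2 (Classical.arbitrary N) (Classical.arbitrary _)
  linarith

/-- If the game has a Nash equilibrium, then the optimal value of (R) is zero:
some feasible point attains objective `0`, and every feasible point has
objective `≥ 0`. -/
theorem feasR_optimal_value_zero (u : N → (∀ j, A j) → ℝ)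
    (hNE : ∃ δstar : ∀ i, A i → ℝ, IsNashEq u δstar) :
    (∃ (δ : ∀ i, A i → ℝ) (v : N → ℝ), FeasR u δ v 0) ∧
    ∀ (δ : ∀ i, A i → ℝ) (v : N → ℝ) (ϖ : ℝ), FeasR u δ v ϖ → 0 ≤ ϖ := by
  obtain ⟨δ, hδ⟩ := hNE
  exact ⟨⟨δ, expUtil u δ, hδ.feasR⟩, fun _ _ _ h => h.nonneg⟩
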